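/- Let 𝒰 ⊆ ℝⁿ be nonempty closed convex, P ≻ 0, ρ > 0, and let J₁,…,J_ν ∈ ℝ^{n×n} satisfy (1/2)(JᵢᵀP + PJᵢ) ⪰ ρP for all i. Then every continuously differentiable map F : ℝⁿ → ℝⁿ whose Jacobian ∂F(u) lies in co{J₁,…,J_ν} for all u ∈ ℝⁿ is ρ-strongly monotone w.r.t. ⟨·,·⟩_P. -/

import Mathlib

open Matrix

noncomputable def innerP {n : ℕ} (P : Matrix (Fin n) (Fin n) ℝ) (x y : Fin n → ℝ) : ℝ :=
  x ⬝ᵥ (P *ᵥ y)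

noncomputable def normP {n : ℕ} (P : Matrix (Fin n) (Fin n) ℝ) (x : Fin n → ℝ) : ℝ :=
  Real.sqrt (x ⬝ᵥ (P *ᵥ x))

/-- Auxiliary: the vertex LMI gives the pointwise quadratic inequality. -/
lemma vertex_ineq {n : ℕ} (P Jm : Matrix (Fin n) (Fin n) ℝ) (hP : P.PosDef) (ρ : ℝ)
    (h : ((1/2 : ℝ) • (Jmᵀ * P + P * Jm) - ρ • P).PosSemidef) (v : Fin n → ℝ) :
    ρ * (v ⬝ᵥ (P *ᵥ v)) ≤ v ⬝ᵥ (P *ᵥ (Jm *ᵥ v)) := by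
  have h0 : (0:ℝ) ≤ v ⬝ᵥ (((1/2 : ℝ) • (Jmᵀ * P + P * Jm) - ρ • P) *ᵥ v) := by
    simpa using h.dotProduct_mulVec_nonneg v
  have hsym : Pᵀ = P := hP.1
  have hPsym : ∀ a b : Fin n → ℝ, a ⬝ᵥ P *ᵥ b = b ⬝ᵥ P *ᵥ a := fun a b => by
    rw [dotProduct_mulVec, ← mulVec_transpose, hsym, dotProduct_comm]
  have h1 : v ⬝ᵥ ((Jmᵀ * P) *ᵥ v) = v ⬝ᵥ (P *ᵥ (Jm *ᵥ v)) := by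
    rw [← mulVec_mulVec, dotProduct_mulVec, vecMul_transpose, hPsym]
  have h2 : v ⬝ᵥ ((P * Jm) *ᵥ v) = v ⬝ᵥ (P *ᵥ (Jm *ᵥ v)) := by
    rw [← mulVec_mulVec]
  rw [sub_mulVec, smul_mulVec, smul_mulVec, dotProduct_sub, dotProduct_smul,
    dotProduct_smul, add_mulVec, dotProduct_add, h1, h2] at h0
  simp only [smul_eq_mul] at h0
  linarith

/-- if all vertex matrices satisfy the strong-monotonicity LMI and the Jacobian
of F stays in the polytope, then F is ρ-strongly monotone w.r.t. ⟨·,·⟩_P. -/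
theorem polytopic_jacobian_strong_monotone {n ν : ℕ}
    (U : Set (Fin n → ℝ)) (hUne : U.Nonempty) (hUcl : IsClosed U) (hUcvx : Convex ℝ U)
    (P : Matrix (Fin n) (Fin n) ℝ) (hP : P.PosDef) (ρ : ℝ) (hρ : 0 < ρ)
    (Js : Fin ν → Matrix (Fin n) (Fin n) ℝ)
    (hLMI : ∀ i, ((1/2 : ℝ) • ((Js i)ᵀ * P + P * Js i) - ρ • P).PosSemidef)
    (F : (Fin n → ℝ) → (Fin n → ℝ)) (hF : ContDiff ℝ 1 F)
    (J : (Fin n → ℝ) → Matrix (Fin n) (Fin n) ℝ)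
    (hJ : ∀ u, HasFDerivAt F ((J u).mulVecLin).toContinuousLinearMap u)
    (hJin : ∀ u, J u ∈ convexHull ℝ (Set.range Js)) :
    ∀ x y, innerP P (x - y) (F x - F y) ≥ ρ * (normP P (x - y))^2 := by
  intro x y
  set v := x - y with hv
  set c : ℝ := v ⬝ᵥ (P *ᵥ v) with hc
  -- the inequality holds for every matrix in the convex hull
  have key : ∀ A ∈ convexHull ℝ (Set.range Js), ρ * c ≤ v ⬝ᵥ (P *ᵥ (A *ᵥ v)) := by
    intro A hA
    have hconv : Convex ℝ {B : Matrix (Fin n) (Fin n) ℝ | ρ * c ≤ v ⬝ᵥ (P *ᵥ (B *ᵥ v))} := by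
      intro B hB C hC a b ha hb hab
      simp only [Set.mem_setOf_eq] at *
      have hBC : (a • B + b • C) *ᵥ v = a • (B *ᵥ v) + b • (C *ᵥ v) := by
        rw [add_mulVec, smul_mulVec, smul_mulVec]
      rw [hBC, mulVec_add, mulVec_smul, mulVec_smul, dotProduct_add, dotProduct_smul,
        dotProduct_smul]
      simp only [smul_eq_mul]
      have hkey : ρ * c = a * (ρ * c) + b * (ρ * c) := by
        rw [← add_mul, hab, one_mul]
      nlinarith [mul_le_mul_of_nonneg_left hB ha, mul_le_mul_of_nonneg_left hC hb]
    exact convexHull_min (by rintro B ⟨i, rfl⟩; exact vertex_ineq P (Js i) hP ρ (hLMI i) v)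
      hconv hA
  have keyJ : ∀ u, ρ * c ≤ v ⬝ᵥ (P *ᵥ ((J u) *ᵥ v)) := fun u => key (J u) (hJin u)
  -- integrate along the segment
  have main : ρ * c ≤ v ⬝ᵥ (P *ᵥ (F x - F y)) := by
    let ℓ : (Fin n → ℝ) →ₗ[ℝ] ℝ :=
    { toFun := fun w => v ⬝ᵥ (P *ᵥ w)
      map_add' := fun a b => by simp [mulVec_add, dotProduct_add]
      map_smul' := fun r a => by simp [mulVec_smul, dotProduct_smul]
    }
    let L := ℓ.toContinuousLinearMap
    have hpath : ∀ t : ℝ, HasDerivAt (fun s : ℝ => y + s • v) v t := by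
      intro t
      simpa using ((hasDerivAt_id t).smul_const v).const_add y
    have hg : ∀ t : ℝ, HasDerivAt (fun s : ℝ => v ⬝ᵥ (P *ᵥ (F (y + s • v))) - ρ * c * s)
        (v ⬝ᵥ (P *ᵥ ((J (y + t • v)) *ᵥ v)) - ρ * c) t := by
      intro t
      have h1 : HasDerivAt (fun s : ℝ => F (y + s • v)) ((J (y + t • v)) *ᵥ v) t := by
        have := (hJ (y + t • v)).comp_hasDerivAt t (hpath t)
        simpa [Function.comp_def] using this
      have h2 : HasDerivAt (L ∘ fun s : ℝ => F (y + s • v)) (L ((J (y + t • v)) *ᵥ v)) t :=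
        (L.hasFDerivAt).comp_hasDerivAt t h1
      have h3 : HasDerivAt (fun s : ℝ => v ⬝ᵥ (P *ᵥ (F (y + s • v))))
          (v ⬝ᵥ (P *ᵥ ((J (y + t • v)) *ᵥ v))) t := h2
      simpa [Pi.sub_def] using h3.sub ((hasDerivAt_id t).const_mul (ρ * c))
    have hdiff : Differentiable ℝ (fun s : ℝ => v ⬝ᵥ (P *ᵥ (F (y + s • v))) - ρ * c * s) :=
      fun t => (hg t).differentiableAt
    have hderiv : ∀ t, 0 ≤ deriv (fun s : ℝ => v ⬝ᵥ (P *ᵥ (F (y + s • v))) - ρ * c * s) t := by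
      intro t
      rw [(hg t).deriv]
      have := keyJ (y + t • v)
      linarith
    have hmono := monotone_of_deriv_nonneg hdiff hderiv zero_le_one
    simp only [zero_smul, add_zero, one_smul, mul_zero, mul_one] at hmono
    have hx : y + v = x := by rw [hv]; abel
    rw [hx] at hmono
    have hsub : F x - F y = F x + (-1 : ℝ) • F y := by simp [sub_eq_add_neg]
    rw [hsub, mulVec_add, dotProduct_add, mulVec_smul, dotProduct_smul]
    simp only [smul_eq_mul]
    linarith
  have hcnn : 0 ≤ c := by simpa using hP.posSemidef.dotProduct_mulVec_nonneg v
  have hnorm : (normP P v)^2 = c := by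
    rw [normP, Real.sq_sqrt hcnn]
  rw [innerP, hnorm]
  exact main
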